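/- Let n, m ≥ 2 and let T be a deterministic decision tree over Σ^M. For ℓ : [m] → [n] and an integer t ≥ 0, after the first t queries of T on input x^ℓ (freezing the counts once T has reached a leaf), say a column j ∈ [m] is compromised if a cell of column j with value 0 has been queried or more than n/2 cells of column j have been queried; let A_t(ℓ) be the number of compromised columns, B_t(ℓ) the number of queried cells lying outside compromised columns, and I_t(ℓ) = A_t(ℓ) + (2/n)·B_t(ℓ). Then for every t ≥ 0, E_ℓ[I_{t+1}(ℓ)] − E_ℓ[I_t(ℓ)] ≤ 4/n, where ℓ is uniform over all functions [m] → [n]. -/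

import Mathlib

open Classical
open scoped ENNReal

set_option maxHeartbeats 1000000

/-! ### Deterministic decision trees -/

inductive DTree (ι σ : Type) : Type
  | leaf (b : Bool) : DTree ι σ
  | node (v : ι) (child : σ → DTree ι σ) : DTree ι σ

namespace DTree

variable {ι σ : Type}

/-- The output of the decision tree on input `x`. -/
def eval (x : ι → σ) : DTree ι σ → Bool
  | leaf b => b
  | node v child => (child (x v)).eval x

/-- The list of variables queried by the decision tree on input `x`,
in the order they are queried. -/
def queryList (x : ι → σ) : DTree ι σ → List ι
  | leaf _ => []
  | node v child => v :: (child (x v)).queryList x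

/-- The cost of the decision tree on input `x`: the number of internal nodes visited. -/
def cost (T : DTree ι σ) (x : ι → σ) : ℕ := (T.queryList x).length

/-- `T` computes `f` if it outputs `f x` on every input `x`. -/
def Computes (T : DTree ι σ) (f : (ι → σ) → Bool) : Prop := ∀ x, T.eval x = f x

end DTree

/-- Deterministic query complexity. -/
noncomputable def detComplexity {ι σ : Type} (f : (ι → σ) → Bool) : ℕ :=
  sInf {d : ℕ | ∃ T : DTree ι σ, T.Computes f ∧ ∀ x, T.cost x ≤ d}

/-- Expected cost of a randomized decision tree (a distribution over deterministic
decision trees) on input `x`. -/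
noncomputable def expCost {ι σ : Type} (μ : PMF (DTree ι σ)) (x : ι → σ) : ℝ≥0∞ :=
  ∑' T : DTree ι σ, μ T * (T.cost x : ℝ≥0∞)

/-- Zero-error (Las Vegas) randomized query complexity. -/
noncomputable def R0query {ι σ : Type} (f : (ι → σ) → Bool) : ℝ≥0∞ :=
  ⨅ μ ∈ {μ : PMF (DTree ι σ) | ∀ T ∈ μ.support, T.Computes f},
    ⨆ x : ι → σ, expCost μ x

/-- One-sided error randomized query complexity. -/
noncomputable def R1query {ι σ : Type} (f : (ι → σ) → Bool) : ℝ≥0∞ :=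
  ⨅ μ ∈ {μ : PMF (DTree ι σ) |
      (∀ x, f x = false → ∀ T ∈ μ.support, T.eval x = false) ∧
      (∀ x, f x = true → 1 / 2 ≤ ∑' T : DTree ι σ, if T.eval x = true then μ T else 0)},
    ⨆ x : ι → σ, expCost μ x

/-- Bounded-error (Monte Carlo) randomized query complexity. -/
noncomputable def Rquery {ι σ : Type} (f : (ι → σ) → Bool) : ℝ≥0∞ :=
  ⨅ μ ∈ {μ : PMF (DTree ι σ) |
      ∀ x, 9 / 10 ≤ ∑' T : DTree ι σ, if T.eval x = f x then μ T else 0},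
    ⨆ x : ι → σ, expCost μ x
/-! ### Quantum query algorithms -/

/-- The standard quantum query oracle `O_x |j,p⟩|w⟩ = |j, p + x_j mod S⟩|w⟩`,
as a matrix. -/
noncomputable def qOracle {V ω : Type} [DecidableEq V] [DecidableEq ω] {S : ℕ}
    (x : V → Fin S) : Matrix (V × Fin S × ω) (V × Fin S × ω) ℂ :=
  fun r c => if r = (c.1, c.2.1 + x c.1, c.2.2) then 1 else 0

/-- A quantum query algorithm on inputs `x : V → Fin S`, making `queries` queries, with
workspace `Fin (W+1)`, alternating the unitaries `U 0, …, U queries` with the oracle,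
and measuring with the projector `P` at the end. -/
structure QAlg (V : Type) [Fintype V] [DecidableEq V] (S : ℕ) [NeZero S] where
  queries : ℕ
  W : ℕ
  init : V
  U : ℕ → Matrix (V × Fin S × Fin (W + 1)) (V × Fin S × Fin (W + 1)) ℂ
  hU : ∀ t, (U t).conjTranspose * U t = 1 ∧ U t * (U t).conjTranspose = 1
  P : Matrix (V × Fin S × Fin (W + 1)) (V × Fin S × Fin (W + 1)) ℂ
  hP : P.conjTranspose = P ∧ P * P = P

namespace QAlg

variable {V : Type} [Fintype V] [DecidableEq V] {S : ℕ} [NeZero S]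

/-- The state of the quantum algorithm after `t` steps on input `x`. -/
noncomputable def state (A : QAlg V S) (x : V → Fin S) :
    ℕ → (V × Fin S × Fin (A.W + 1) → ℂ)
  | 0 => (A.U 0).mulVec fun r => if r = (A.init, 0, 0) then 1 else 0
  | t + 1 => (A.U (t + 1)).mulVec ((qOracle x).mulVec (A.state x t))

/-- The probability that the algorithm accepts input `x`: `‖P |Ψ_x⟩‖²`. -/
noncomputable def acceptProb (A : QAlg V S) (x : V → Fin S) : ℝ :=
  ∑ r : V × Fin S × Fin (A.W + 1), Complex.normSq (A.P.mulVec (A.state x A.queries) r)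

end QAlg

/-- Bounded-error quantum query complexity (for functions over a finite input
alphabet `σ`, identified with `Fin (card σ)` via a fixed bijection). -/
noncomputable def Qquery {V σ : Type} [Fintype V] [DecidableEq V] [Fintype σ] [Nonempty σ]
    (f : (V → σ) → Bool) : ℕ :=
  letI : NeZero (Fintype.card σ) := ⟨Fintype.card_ne_zero⟩
  sInf {t : ℕ | ∃ A : QAlg V (Fintype.card σ), A.queries = t ∧
    ∀ x : V → σ,
      (f x = true → 9 / 10 ≤ A.acceptProb fun j => Fintype.equivFin σ (x j)) ∧
      (f x = false → A.acceptProb (fun j => Fintype.equivFin σ (x j)) ≤ 1 / 10)}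

/-- Exact quantum query complexity. -/
noncomputable def QEquery {V σ : Type} [Fintype V] [DecidableEq V] [Fintype σ] [Nonempty σ]
    (f : (V → σ) → Bool) : ℕ :=
  letI : NeZero (Fintype.card σ) := ⟨Fintype.card_ne_zero⟩
  sInf {t : ℕ | ∃ A : QAlg V (Fintype.card σ), A.queries = t ∧
    ∀ x : V → σ,
      (f x = true → A.acceptProb (fun j => Fintype.equivFin σ (x j)) = 1) ∧
      (f x = false → A.acceptProb (fun j => Fintype.equivFin σ (x j)) = 0)}

/-- Approximate degree of a boolean function. -/
noncomputable def adeg {ι : Type} (F : (ι → Bool) → Bool) : ℕ :=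
  sInf {d : ℕ | ∃ p : MvPolynomial ι ℝ, p.totalDegree ≤ d ∧
    ∀ y : ι → Bool, |MvPolynomial.eval (fun i => if y i then (1 : ℝ) else 0) p -
      (if F y then 1 else 0)| ≤ 1 / 10}
/-! ### The pointer functions of Göös–Pitassi–Watson type -/

/-- A symbol of the input alphabet: a boolean value, a left pointer, a right pointer,
and a back/internal pointer (to a cell or a column, depending on `β`). -/
structure PSym (n m : ℕ) (β : Type) where
  val : Bool
  lp : Option (Fin n × Fin m)
  rp : Option (Fin n × Fin m)
  bp : Option β
deriving DecidableEq

/-- The all-ones symbol `(1,⊥,⊥,⊥)`. -/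
def PSym.one (n m : ℕ) (β : Type) : PSym n m β := ⟨true, none, none, none⟩

/-- The symbol `(0,⊥,⊥,⊥)`. -/
def PSym.zero (n m : ℕ) (β : Type) : PSym n m β := ⟨false, none, none, none⟩

def PSym.equivProd (n m : ℕ) (β : Type) :
    PSym n m β ≃ Bool × Option (Fin n × Fin m) × Option (Fin n × Fin m) × Option β where
  toFun v := (v.val, v.lp, v.rp, v.bp)
  invFun p := ⟨p.1, p.2.1, p.2.2.1, p.2.2.2⟩
  left_inv _ := rfl
  right_inv _ := rfl

instance {n m : ℕ} {β : Type} [Fintype β] : Fintype (PSym n m β) :=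
  Fintype.ofEquiv _ (PSym.equivProd n m β).symm

instance {n m : ℕ} {β : Type} : Nonempty (PSym n m β) := ⟨PSym.one n m β⟩

/-- The sequence of k bits of `j`, most significant first:  the root-to-leaf path
(`false` = left, `true` = right) of the `j`-th leaf in the complete binary tree of depth `k`. -/
def bitsPath (k j : ℕ) : List Bool :=
  ((List.range k).reverse).map fun i => j.testBit i

/-- The root-to-leaf path of the leaf labeled `j` (0-indexed) in the balanced binary tree
with `m` leaves: the complete binary tree if `m` is a power of 2, and otherwise the complete
binary tree on `2 ^ ⌊log₂ m⌋` leaves with a pair of children added to each of the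
`m - 2 ^ ⌊log₂ m⌋` leftmost leaves. -/
def treePath (m j : ℕ) : List Bool :=
  if m - 2 ^ Nat.log 2 m = 0 then bitsPath (Nat.log 2 m) j
  else if j < 2 * (m - 2 ^ Nat.log 2 m) then
    bitsPath (Nat.log 2 m) (j / 2) ++ [j % 2 == 1]
  else bitsPath (Nat.log 2 m) (j - (m - 2 ^ Nat.log 2 m))

/-- Starting at cell `a` and following the left/right pointers of `x` as prescribed by the
list `p` of moves (`false` = left pointer, `true` = right pointer); returns `none` if a
null pointer is encountered. -/
def followPath {n m : ℕ} {β : Type} (x : Fin n × Fin m → PSym n m β)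
    (a : Fin n × Fin m) (p : List Bool) : Option (Fin n × Fin m) :=
  p.foldl (fun acc b => acc.bind fun c => if b then (x c).rp else (x c).lp) (some a)

/-- The conditions for `x` to be a 1-input of `f_{n,m}`, with marked column `b` and special
element `a`: (1) `b` is the unique all-1 column; (2) `a` is the unique cell of column `b`
with `x_a ≠ (1,⊥,⊥,⊥)`; (3) for every column `j ≠ b` the tree path from `a` to the leaf
labeled `j` exists, and ends at a cell `ℓ_j` of column `j` holding a 0; (4) the back pointer
of each `ℓ_j` points to the column `b`. -/
def fCond (n m : ℕ) (x : Fin n × Fin m → PSym n m (Fin m))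
    (b : Fin m) (a : Fin n × Fin m) : Prop :=
  (∀ j : Fin m, (∀ i : Fin n, (x (i, j)).val = true) ↔ j = b) ∧
  a.2 = b ∧
  (∀ i : Fin n, x (i, b) ≠ PSym.one n m (Fin m) ↔ (i, b) = a) ∧
  ∀ j : Fin m, j ≠ b →
    ∃ ℓ : Fin n × Fin m, followPath x a (treePath m j.1) = some ℓ ∧
      ℓ.2 = j ∧ (x ℓ).val = false ∧ (x ℓ).bp = some b

/-- The pointer function `f_{n,m}`, with back pointers to the marked column. -/
noncomputable def fFun (n m : ℕ) (x : Fin n × Fin m → PSym n m (Fin m)) : Bool :=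
  if ∃ b a, fCond n m x b a then true else false

/-- The conditions for `x` to be a 1-input of `g_{n,m}`, with marked column `b` and special
element `a`: (1)–(3) as for `f_{n,m}`, and (4′) the set of columns `j ≠ b` whose highlighted
zero `ℓ_j` has back pointer to `a` has size exactly `m/2`. -/
def gCond (n m : ℕ) (x : Fin n × Fin m → PSym n m (Fin n × Fin m))
    (b : Fin m) (a : Fin n × Fin m) : Prop :=
  (∀ j : Fin m, (∀ i : Fin n, (x (i, j)).val = true) ↔ j = b) ∧
  a.2 = b ∧
  (∀ i : Fin n, x (i, b) ≠ PSym.one n m (Fin n × Fin m) ↔ (i, b) = a) ∧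
  (∀ j : Fin m, j ≠ b →
    ∃ ℓ : Fin n × Fin m, followPath x a (treePath m j.1) = some ℓ ∧
      ℓ.2 = j ∧ (x ℓ).val = false) ∧
  {j : Fin m | j ≠ b ∧ ∃ ℓ : Fin n × Fin m,
      followPath x a (treePath m j.1) = some ℓ ∧ (x ℓ).bp = some a}.ncard = m / 2

/-- The pointer function `g_{n,m}`, where exactly `m/2` of the highlighted zeroes point
back to the special element. -/
noncomputable def gFun (n m : ℕ) (x : Fin n × Fin m → PSym n m (Fin n × Fin m)) : Bool :=
  if ∃ b a, gCond n m x b a then true else false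

/-- Column `j` is good in `x` (for `g_{n,m}`): `x` is a 1-input with marked column `b ≠ j`
and special element `a`, and the highlighted zero of column `j` points back to `a`. -/
def goodColumn (n m : ℕ) (x : Fin n × Fin m → PSym n m (Fin n × Fin m)) (j : Fin m) : Prop :=
  ∃ b a, gCond n m x b a ∧ j ≠ b ∧
    ∃ ℓ : Fin n × Fin m, followPath x a (treePath m j.1) = some ℓ ∧ (x ℓ).bp = some a

/-- The conditions for `x` to be a 1-input of `h_{k,n,m}`, with marked columns `b 0,…,b (k-1)`
and special elements `a 0,…,a (k-1)`: (1) the `b s` are exactly the all-1 columns; (2) `a s` is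
the unique cell of column `b s` with `x_{a s} ≠ (1,⊥,⊥,⊥)`; (3) the internal pointers of the
`a s` form a cycle and all the `a s` have equal left pointers and equal right pointers;
(4) for every non-marked column `j` the tree path from any `a s` to the leaf labeled `j`
exists and ends at a cell `ℓ_j` of column `j` holding a 0. -/
def hCond (k n m : ℕ) (x : Fin n × Fin m → PSym n m (Fin n × Fin m))
    (b : Fin k → Fin m) (a : Fin k → Fin n × Fin m) : Prop :=
  Function.Injective b ∧
  (∀ j : Fin m, (∀ i : Fin n, (x (i, j)).val = true) ↔ ∃ s, b s = j) ∧
  (∀ s, (a s).2 = b s) ∧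
  (∀ s, ∀ i : Fin n, x (i, b s) ≠ PSym.one n m (Fin n × Fin m) ↔ (i, b s) = a s) ∧
  (∀ s : Fin k, (x (a s)).bp = some (a ⟨(s.1 + 1) % k, Nat.mod_lt _ s.pos⟩)) ∧
  (∀ s t : Fin k, (x (a s)).lp = (x (a t)).lp ∧ (x (a s)).rp = (x (a t)).rp) ∧
  ∀ j : Fin m, (∀ s, b s ≠ j) → ∀ s : Fin k,
    ∃ ℓ : Fin n × Fin m, followPath x (a s) (treePath m j.1) = some ℓ ∧
      ℓ.2 = j ∧ (x ℓ).val = false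

/-- The pointer function `h_{k,n,m}` with `k` marked columns and no back pointers. -/
noncomputable def hFun (k n m : ℕ) (x : Fin n × Fin m → PSym n m (Fin n × Fin m)) : Bool :=
  if ∃ b a, hCond k n m x b a then true else false

/-- The hard input `x^ℓ`: cell `(i,j)` holds `(0,⊥,⊥,⊥)` if `i = ℓ j` and `(1,⊥,⊥,⊥)`
otherwise. -/
def xhard (n m : ℕ) (β : Type) (ℓ : Fin m → Fin n) : Fin n × Fin m → PSym n m β :=
  fun c => if c.1 = ℓ c.2 then PSym.zero n m β else PSym.one n m β

/-- The set of (distinct) cells queried among the first `t` queries of `T` on input `x`. -/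
def queriedUpTo {ι σ : Type} [DecidableEq ι] (T : DTree ι σ) (x : ι → σ) (t : ℕ) :
    Finset ι :=
  ((T.queryList x).take t).toFinset
/-! ### The progress measure for the hard distribution `x^ℓ` -/

/-- Column `j` is compromised (for the input `x^ℓ`), given the set `Q` of queried cells:
the zero cell `(ℓ j, j)` has been queried, or more than `n/2` cells of column `j` have been
queried. -/
def compromisedCol (n m : ℕ) (ℓ : Fin m → Fin n) (Q : Finset (Fin n × Fin m))
    (j : Fin m) : Prop :=
  (ℓ j, j) ∈ Q ∨ n < 2 * (Q.filter fun c => c.2 = j).card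

/-- The progress measure `I_t = A_t + (2/n)·B_t` of the decision tree `T` on the input `x^ℓ`
after `t` queries, where `A_t` is the number of compromised columns and `B_t` is the number
of queried cells lying outside compromised columns. -/
noncomputable def Imeasure (n m : ℕ)
    (T : DTree (Fin n × Fin m) (PSym n m (Fin n × Fin m))) (ℓ : Fin m → Fin n) (t : ℕ) : ℝ :=
  ({j : Fin m |
      compromisedCol n m ℓ (queriedUpTo T (xhard n m (Fin n × Fin m) ℓ) t) j}.ncard : ℝ) +
    (2 / n) * ({c : Fin n × Fin m | c ∈ queriedUpTo T (xhard n m (Fin n × Fin m) ℓ) t ∧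
      ¬ compromisedCol n m ℓ (queriedUpTo T (xhard n m (Fin n × Fin m) ℓ) t) c.2}.ncard : ℝ)
/-! ### The balanced binary tree, via root-to-node paths -/

/-- The node set of the balanced binary tree with `m` leaves: each node is identified with
the left/right path from the root to it, so the nodes are exactly the prefixes of the
root-to-leaf paths. -/
def treeNodes (m : ℕ) : Finset (List Bool) :=
  (Finset.range m).biUnion fun j => (treePath m j).inits.toFinset

/-- The leaves of the balanced binary tree with `m` leaves. -/
def leafNodes (m : ℕ) : Finset (List Bool) :=
  (Finset.range m).image fun j => treePath m j

/-- The internal nodes of the balanced binary tree with `m` leaves. -/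
def internalNodes (m : ℕ) : Finset (List Bool) :=
  treeNodes m \ leafNodes m

/-- The subtree rooted at a node `u`: all nodes of which `u` is a prefix. -/
def subtreeOf (m : ℕ) (u : List Bool) : Finset (List Bool) :=
  (treeNodes m).filter fun w => u <+: w

/-! ### The hard distribution for `h_{1,n,m}` -/

/-- A parameter quadruple `(v, π, ℓᴸ, ℓᴺ)` for the hard distribution: a bit `v`, a map `π`
from internal tree nodes to columns, and row maps `ℓᴸ, ℓᴺ` for leaves resp. internal nodes. -/
abbrev HardQ (n m : ℕ) : Type :=
  Bool × ({u : List Bool // u ∈ internalNodes m} → Fin m) × (Fin m → Fin n) × (Fin m → Fin n)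

/-- The valid parameter quadruples: `π` injective and `ℓᴸ j ≠ ℓᴺ j` for all `j`. -/
noncomputable def hardSet (n m : ℕ) : Finset (HardQ n m) :=
  Finset.univ.filter fun q => Function.Injective q.2.1 ∧ ∀ j, q.2.2.1 j ≠ q.2.2.2 j

/-- The column of the root of the tree (`none` if the tree has no internal node). -/
noncomputable def rootCol (n m : ℕ) (q : HardQ n m) : Option (Fin m) :=
  if h : ([] : List Bool) ∈ internalNodes m then some (q.2.1 ⟨[], h⟩) else none

/-- The cell where a child node `w` of an internal node is placed: internal nodes go to
cell `(ℓᴺ (π w), π w)`, the leaf labeled `j` goes to cell `(ℓᴸ j, j)`, and the removed leaf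
(the one labeled by the root's column) yields a null pointer. -/
noncomputable def childCell (n m : ℕ) (q : HardQ n m) (w : List Bool) :
    Option (Fin n × Fin m) :=
  if h : w ∈ internalNodes m then some (q.2.2.2 (q.2.1 ⟨w, h⟩), q.2.1 ⟨w, h⟩)
  else if h2 : ∃ j : Fin m, w = treePath m j.1 ∧ some j ≠ rootCol n m q then
    some (q.2.2.1 (Classical.choose h2), Classical.choose h2)
  else none

/-- The input of the hard distribution determined by the parameter quadruple `q`:
the internal node `u` of the tree is placed at cell `(ℓᴺ (π u), π u)` with left and right
pointers to the cells of its children, value `v` and a self-loop internal pointer if `u` is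
the root, and value 0 otherwise; for `j ≠ π(root)`, the leaf labeled `j` is placed at cell
`(ℓᴸ j, j)` with value 0 and null pointers; all the remaining cells hold `(1,⊥,⊥,⊥)`. -/
noncomputable def hardInput (n m : ℕ) (q : HardQ n m) :
    Fin n × Fin m → PSym n m (Fin n × Fin m) :=
  fun c =>
    if h : ∃ u : {u : List Bool // u ∈ internalNodes m}, q.2.1 u = c.2 ∧ q.2.2.2 c.2 = c.1 then
      { val := if (Classical.choose h).1 = [] then q.1 else false
        lp := childCell n m q ((Classical.choose h).1 ++ [false])
        rp := childCell n m q ((Classical.choose h).1 ++ [true])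
        bp := if (Classical.choose h).1 = [] then some c else none }
    else if some c.2 ≠ rootCol n m q ∧ c.1 = q.2.2.1 c.2 then PSym.zero n m (Fin n × Fin m)
    else PSym.one n m (Fin n × Fin m)

/-- Column `j` directly satisfies (i) or (ii): one of the cells `(ℓᴸ j, j)`, `(ℓᴺ j, j)` has
been queried, or more than half of the cells of column `j` have been queried. -/
def colBad (n m : ℕ) (q : HardQ n m) (Q : Finset (Fin n × Fin m)) (j : Fin m) : Prop :=
  (q.2.2.1 j, j) ∈ Q ∨ (q.2.2.2 j, j) ∈ Q ∨ n < 2 * (Q.filter fun c => c.2 = j).card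

/-- Column `j` is compromised: it satisfies (i) or (ii), or some ancestor `u` of `π⁻¹(j)`
in the tree is such that column `π u` satisfies (i) or (ii). -/
def compromisedCol19 (n m : ℕ) (q : HardQ n m) (Q : Finset (Fin n × Fin m))
    (j : Fin m) : Prop :=
  colBad n m q Q j ∨
  ∃ w u : {u : List Bool // u ∈ internalNodes m}, q.2.1 w = j ∧
    u.1 <+: w.1 ∧ u.1 ≠ w.1 ∧ colBad n m q Q (q.2.1 u)

/-- The progress measure `I_t = min{A_t + (4·C0·log₂ m / n)·B_t, m/2}` of the decision tree
`D` on the hard-distribution input given by `q` after `t` queries, where `A_t` is the number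
of compromised columns and `B_t` the number of queried cells outside compromised columns. -/
noncomputable def Imeasure19 (n m : ℕ) (C0 : ℝ)
    (D : DTree (Fin n × Fin m) (PSym n m (Fin n × Fin m))) (q : HardQ n m) (t : ℕ) : ℝ :=
  min
    (({j : Fin m | compromisedCol19 n m q (queriedUpTo D (hardInput n m q) t) j}.ncard : ℝ) +
      (4 * C0 * Real.logb 2 m / n) *
        ({c : Fin n × Fin m | c ∈ queriedUpTo D (hardInput n m q) t ∧
          ¬ compromisedCol19 n m q (queriedUpTo D (hardInput n m q) t) c.2}.ncard : ℝ))
    (m / 2)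

/-!
Write `I_t` as a sum over columns of a weight: `1` for a compromised column, and `2/n` times
the number of its queried cells otherwise. A query changes only the weight of its own column,
and by at most `2/n`, unless it hits the zero of a still uncompromised column. Such hits are
rare: if the `(t+1)`-st query on `x^ℓ` hits the zero of column `j`, then moving that zero to
any of the at least `n/2` unqueried rows `i` of column `j` leaves the first `t+1` queries
unchanged, so `(ℓ, j, i) ↦ ℓ[j ↦ i]` is injective (the next query of `ℓ[j ↦ i]` recovers `j`
and `ℓ j`). Hence hits have probability at most `2/n`.
-/

namespace DTree

variable {ι σ : Type}

def nextQuery (T : DTree ι σ) (x : ι → σ) (t : ℕ) : Option ι := (T.queryList x)[t]?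

theorem take_succ_queryList_eq_of_eqOn {T : DTree ι σ} {x x' : ι → σ} {t : ℕ}
    (h : ∀ v ∈ (T.queryList x).take t, x' v = x v) :
    (T.queryList x').take (t + 1) = (T.queryList x).take (t + 1) := by
  induction T generalizing t with
  | leaf b => rfl
  | node v child ih =>
    cases t with
    | zero => rfl
    | succ t =>
      have hv : x' v = x v := h v (by simp [queryList])
      simp only [queryList, hv, List.take_succ_cons]
      congr 1
      exact ih (x v) fun w hw => h w (by simp [queryList, List.take_succ_cons, hw])

end DTree

section QueriedUpTo

variable {ι σ : Type} [DecidableEq ι] {T : DTree ι σ} {x x' : ι → σ} {t : ℕ}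

theorem queriedUpTo_eq_of_eqOn (h : ∀ v ∈ queriedUpTo T x t, x' v = x v) :
    queriedUpTo T x' t = queriedUpTo T x t := by
  have := congrArg (List.take t) <|
    DTree.take_succ_queryList_eq_of_eqOn (t := t) fun v hv => h v (List.mem_toFinset.2 hv)
  simp only [List.take_take, Nat.le_succ, min_eq_left] at this
  rw [queriedUpTo, queriedUpTo, this]

theorem nextQuery_eq_of_eqOn (h : ∀ v ∈ queriedUpTo T x t, x' v = x v) :
    T.nextQuery x' t = T.nextQuery x t := by
  have := congrArg (·[t]?) <|
    DTree.take_succ_queryList_eq_of_eqOn (t := t) fun v hv => h v (List.mem_toFinset.2 hv)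
  simpa [List.getElem?_take, DTree.nextQuery] using this

theorem queriedUpTo_succ_of_nextQuery_eq_none (h : T.nextQuery x t = none) :
    queriedUpTo T x (t + 1) = queriedUpTo T x t := by
  rw [DTree.nextQuery] at h
  simp [queriedUpTo, List.take_add_one, h]

theorem queriedUpTo_succ_of_nextQuery_eq_some {v : ι} (h : T.nextQuery x t = some v) :
    queriedUpTo T x (t + 1) = insert v (queriedUpTo T x t) := by
  rw [DTree.nextQuery] at h
  simp [queriedUpTo, List.take_add_one, h]

end QueriedUpTo

section Progress

variable {n m : ℕ} {ℓ : Fin m → Fin n} {Q : Finset (Fin n × Fin m)}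

theorem compromisedCol.mono {Q' : Finset (Fin n × Fin m)} (hQ : Q ⊆ Q') {j : Fin m}
    (h : compromisedCol n m ℓ Q j) : compromisedCol n m ℓ Q' j :=
  h.imp (@hQ _) fun h => h.trans_le <| Nat.mul_le_mul_left 2 <|
    Finset.card_le_card <| Finset.filter_subset_filter _ hQ

theorem compromisedCol_insert_of_ne {c : Fin n × Fin m} {j : Fin m} (hc : c.2 ≠ j) :
    compromisedCol n m ℓ (insert c Q) j ↔ compromisedCol n m ℓ Q j := by
  have hne : (ℓ j, j) ≠ c := fun h => hc (congrArg Prod.snd h).symm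
  simp only [compromisedCol, Finset.mem_insert, hne, false_or, Finset.filter_insert, hc,
    if_false]

noncomputable def columnWeight (n m : ℕ) (ℓ : Fin m → Fin n) (Q : Finset (Fin n × Fin m))
    (j : Fin m) : ℝ :=
  if compromisedCol n m ℓ Q j then 1 else 2 / n * (Q.filter fun c => c.2 = j).card

theorem ncard_compromisedCol_add_eq_sum_columnWeight :
    ({j : Fin m | compromisedCol n m ℓ Q j}.ncard : ℝ) +
      2 / n * ({c : Fin n × Fin m | c ∈ Q ∧ ¬ compromisedCol n m ℓ Q c.2}.ncard : ℝ) =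
      ∑ j, columnWeight n m ℓ Q j := by
  have hA : ({j : Fin m | compromisedCol n m ℓ Q j}.ncard : ℝ) =
      ∑ j, if compromisedCol n m ℓ Q j then 1 else 0 := by
    rw [Set.ncard_eq_toFinset_card', Set.toFinset_ofPred, Finset.natCast_card_filter]
  have hB : ({c : Fin n × Fin m | c ∈ Q ∧ ¬ compromisedCol n m ℓ Q c.2}.ncard : ℝ) =
      ∑ j, if compromisedCol n m ℓ Q j then 0 else ((Q.filter fun c => c.2 = j).card : ℝ) := by
    have hset : {c : Fin n × Fin m | c ∈ Q ∧ ¬ compromisedCol n m ℓ Q c.2} =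
        ↑(Q.filter fun c => ¬ compromisedCol n m ℓ Q c.2) := by
      ext; simp
    rw [hset, Set.ncard_coe_finset, Finset.natCast_card_filter,
      ← Finset.sum_fiberwise Q Prod.snd]
    refine Finset.sum_congr rfl fun j _ => ?_
    calc ∑ c ∈ Q with c.2 = j, (if ¬ compromisedCol n m ℓ Q c.2 then (1 : ℝ) else 0)
        _ = ∑ c ∈ Q with c.2 = j, (if ¬ compromisedCol n m ℓ Q j then (1 : ℝ) else 0) :=
          Finset.sum_congr rfl fun c hc => by rw [(Finset.mem_filter.1 hc).2]
        _ = _ := by split_ifs <;> simp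
  rw [hA, hB, Finset.mul_sum, ← Finset.sum_add_distrib]
  refine Finset.sum_congr rfl fun j _ => ?_
  unfold columnWeight
  split_ifs <;> ring

theorem columnWeight_insert_of_ne {c : Fin n × Fin m} {j : Fin m} (hc : c.2 ≠ j) :
    columnWeight n m ℓ (insert c Q) j = columnWeight n m ℓ Q j := by
  simp only [columnWeight, compromisedCol_insert_of_ne hc, Finset.filter_insert, hc, if_false]

theorem columnWeight_insert_sub_le (i : Fin n) (j : Fin m) :
    columnWeight n m ℓ (insert (i, j) Q) j - columnWeight n m ℓ Q j ≤
      2 / n + if i = ℓ j ∧ ¬ compromisedCol n m ℓ Q j then 1 else 0 := by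
  have hn : (0 : ℝ) < n := by exact_mod_cast i.pos
  have h2n : 0 ≤ (2 : ℝ) / n := by positivity
  set k := (Q.filter fun c => c.2 = j).card
  have hk' : ((insert (i, j) Q).filter fun c => c.2 = j).card ≤ k + 1 := by
    rw [Finset.filter_insert, if_pos rfl]
    exact Finset.card_insert_le _ _
  by_cases hQ : compromisedCol n m ℓ Q j
  · rw [columnWeight, columnWeight, if_pos (hQ.mono (Finset.subset_insert _ _)), if_pos hQ]
    split_ifs <;> linarith
  have hk : 2 * k ≤ n := not_lt.1 fun h => hQ (Or.inr h)
  by_cases hQ' : compromisedCol n m ℓ (insert (i, j) Q) j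
  · rw [columnWeight, columnWeight, if_pos hQ', if_neg hQ]
    by_cases hi : i = ℓ j
    · rw [if_pos ⟨hi, hQ⟩]
      have : 0 ≤ 2 / n * (k : ℝ) := by positivity
      linarith
    -- the column got compromised by its count alone, so it already had `k ≥ (n - 1)/2` cells
    have hzero : (ℓ j, j) ∉ insert (i, j) Q := by
      simp only [Finset.mem_insert, Prod.mk.injEq, and_true, not_or]
      exact ⟨Ne.symm hi, fun h => hQ (Or.inl h)⟩
    have : (n : ℝ) ≤ 2 * k + 1 := by
      have := hQ'.resolve_left hzero
      exact_mod_cast (by omega : n ≤ 2 * k + 1)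
    rw [if_neg fun h => hi h.1, add_zero, sub_le_iff_le_add, div_mul_eq_mul_div, ← add_div,
      le_div_iff₀ hn]
    linarith
  · rw [columnWeight, columnWeight, if_neg hQ', if_neg hQ]
    have : 2 / n * (((insert (i, j) Q).filter fun c => c.2 = j).card : ℝ) ≤ 2 / n * (k + 1) :=
      mul_le_mul_of_nonneg_left (by exact_mod_cast hk') h2n
    split_ifs <;> linarith

theorem sum_columnWeight_insert_sub_le (c : Fin n × Fin m) :
    ∑ j, columnWeight n m ℓ (insert c Q) j - ∑ j, columnWeight n m ℓ Q j ≤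
      2 / n + (Finset.univ.filter fun j => c = (ℓ j, j) ∧ ¬ compromisedCol n m ℓ Q j).card := by
  obtain ⟨i, j⟩ := c
  rw [← Finset.sum_sub_distrib, Finset.sum_eq_single j
    (fun j' _ hj' => by rw [columnWeight_insert_of_ne (Ne.symm hj'), sub_self])
    (by simp)]
  refine (columnWeight_insert_sub_le i j).trans (add_le_add_right ?_ _)
  split_ifs with hit
  · exact_mod_cast Finset.card_pos.2 ⟨j, by simp [hit]⟩
  · positivity

end Progress

theorem le_two_mul_card_unqueried {n m : ℕ} {ℓ : Fin m → Fin n} {Q : Finset (Fin n × Fin m)}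
    {j : Fin m} (h : ¬ compromisedCol n m ℓ Q j) :
    n ≤ 2 * (Finset.univ.filter fun i : Fin n => (i, j) ∉ Q).card := by
  have hcol : Q.filter (fun c => c.2 = j) =
      (Finset.univ.filter fun i : Fin n => (i, j) ∈ Q).map
        (Function.Embedding.sectL (Fin n) j) := by
    ext ⟨i, j'⟩
    simp only [Finset.mem_filter, Finset.mem_map, Finset.mem_univ, true_and,
      Function.Embedding.sectL_apply, Prod.mk.injEq]
    constructor
    · rintro ⟨hc, rfl⟩; exact ⟨i, hc, rfl, rfl⟩
    · rintro ⟨i, hc, rfl, rfl⟩; exact ⟨hc, rfl⟩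
  have hfew : 2 * (Q.filter fun c => c.2 = j).card ≤ n := not_lt.1 fun h' => h (Or.inr h')
  have hsplit := Finset.card_filter_add_card_filter_not (s := Finset.univ)
    (fun i : Fin n => (i, j) ∈ Q)
  rw [hcol, Finset.card_map] at hfew
  rw [Finset.card_univ, Fintype.card_fin] at hsplit
  omega

theorem xhard_update_eqOn {n m : ℕ} {β : Type} {ℓ : Fin m → Fin n} {Q : Finset (Fin n × Fin m)}
    {i : Fin n} {j : Fin m} (hzero : (ℓ j, j) ∉ Q) (hi : (i, j) ∉ Q) :
    ∀ c ∈ Q, xhard n m β (Function.update ℓ j i) c = xhard n m β ℓ c := by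
  rintro ⟨i', j'⟩ hc
  by_cases hj : j' = j
  · subst hj
    have h₁ : i' ≠ i := by rintro rfl; exact hi hc
    have h₂ : i' ≠ ℓ j' := by rintro rfl; exact hzero hc
    simp [xhard, h₁, h₂]
  · simp [xhard, Function.update_of_ne hj]

section HitsZero

variable {n m : ℕ} (T : DTree (Fin n × Fin m) (PSym n m (Fin n × Fin m)))

def HitsZero (ℓ : Fin m → Fin n) (t : ℕ) (j : Fin m) : Prop :=
  T.nextQuery (xhard n m _ ℓ) t = some (ℓ j, j) ∧
    ¬ compromisedCol n m ℓ (queriedUpTo T (xhard n m _ ℓ) t) j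

theorem Imeasure_succ_sub_le (ℓ : Fin m → Fin n) (t : ℕ) :
    Imeasure n m T ℓ (t + 1) - Imeasure n m T ℓ t ≤
      2 / n + (Finset.univ.filter (HitsZero T ℓ t)).card := by
  simp only [Imeasure, ncard_compromisedCol_add_eq_sum_columnWeight]
  cases h : T.nextQuery (xhard n m _ ℓ) t with
  | none =>
    rw [queriedUpTo_succ_of_nextQuery_eq_none h, sub_self]
    positivity
  | some c =>
    rw [queriedUpTo_succ_of_nextQuery_eq_some h]
    convert sum_columnWeight_insert_sub_le c using 5
    simp [HitsZero, h]

variable {T}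

theorem HitsZero.nextQuery_update {ℓ : Fin m → Fin n} {t : ℕ} {j : Fin m} (h : HitsZero T ℓ t j)
    {i : Fin n} (hi : (i, j) ∉ queriedUpTo T (xhard n m _ ℓ) t) :
    T.nextQuery (xhard n m _ (Function.update ℓ j i)) t = some (ℓ j, j) :=
  (nextQuery_eq_of_eqOn (xhard_update_eqOn (fun h' => h.2 (Or.inl h')) hi)).trans h.1

end HitsZero

theorem card_hitsZero_le {n m : ℕ} (T : DTree (Fin n × Fin m) (PSym n m (Fin n × Fin m)))
    (t : ℕ) :
    n * ∑ ℓ, (Finset.univ.filter (HitsZero T ℓ t)).card ≤ 2 * Fintype.card (Fin m → Fin n) := by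
  set H := Finset.univ.filter fun p : (Fin m → Fin n) × Fin m => HitsZero T p.1 t p.2
  have hH : ∑ ℓ, (Finset.univ.filter (HitsZero T ℓ t)).card = H.card := by
    simp only [H, Finset.card_filter, Fintype.sum_prod_type]
  set R : (Fin m → Fin n) × Fin m → Finset (Fin n) := fun p =>
    Finset.univ.filter fun i => (i, p.2) ∉ queriedUpTo T (xhard n m _ p.1) t
  have hinj : Set.InjOn (fun q : (_ : (Fin m → Fin n) × Fin m) × Fin n =>
      Function.update q.1.1 q.1.2 q.2) ↑(H.sigma R) := by
    rintro ⟨⟨ℓ₁, j₁⟩, i₁⟩ hq₁ ⟨⟨ℓ₂, j₂⟩, i₂⟩ hq₂ heq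
    simp only [Finset.coe_sigma, Set.mem_sigma_iff, Finset.mem_coe, Finset.mem_filter,
      Finset.mem_univ, true_and, H, R] at hq₁ hq₂ heq
    have hnext := (hq₁.1.nextQuery_update hq₁.2).symm.trans (heq ▸ hq₂.1.nextQuery_update hq₂.2)
    simp only [Option.some.injEq, Prod.mk.injEq] at hnext
    obtain ⟨hrow, rfl⟩ := hnext
    obtain rfl : i₁ = i₂ := by simpa using congrFun heq j₁
    obtain rfl : ℓ₁ = ℓ₂ := calc
      ℓ₁ = Function.update (Function.update ℓ₁ j₁ i₁) j₁ (ℓ₁ j₁) := by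
        rw [Function.update_idem, Function.update_eq_self]
      _ = Function.update (Function.update ℓ₂ j₁ i₁) j₁ (ℓ₂ j₁) := by rw [heq, hrow]
      _ = ℓ₂ := by rw [Function.update_idem, Function.update_eq_self]
    rfl
  calc n * ∑ ℓ, (Finset.univ.filter (HitsZero T ℓ t)).card
      = ∑ p ∈ H, n := by rw [hH, Finset.sum_const, smul_eq_mul, mul_comm]
    _ ≤ ∑ p ∈ H, 2 * (R p).card :=
      Finset.sum_le_sum fun p hp => le_two_mul_card_unqueried (Finset.mem_filter.1 hp).2.2
    _ = 2 * (H.sigma R).card := by rw [Finset.card_sigma, Finset.mul_sum]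
    _ ≤ 2 * Fintype.card (Fin m → Fin n) :=
      Nat.mul_le_mul_left 2 <| (Finset.card_le_card_of_injOn _
        (fun _ _ => Finset.mem_coe.2 (Finset.mem_univ _)) hinj).trans_eq Finset.card_univ

theorem statement7_general (n m : ℕ) (hn : 2 ≤ n)
    (T : DTree (Fin n × Fin m) (PSym n m (Fin n × Fin m))) (t : ℕ) :
    (∑ ℓ : Fin m → Fin n, Imeasure n m T ℓ (t + 1)) / (Fintype.card (Fin m → Fin n) : ℝ) -
      (∑ ℓ : Fin m → Fin n, Imeasure n m T ℓ t) / (Fintype.card (Fin m → Fin n) : ℝ) ≤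
      4 / n := by
  set N := Fintype.card (Fin m → Fin n)
  have hn0 : (0 : ℝ) < n := by exact_mod_cast (by omega : 0 < n)
  have : Nonempty (Fin n) := ⟨⟨0, by omega⟩⟩
  have hN : (0 : ℝ) < N := by exact_mod_cast Fintype.card_pos
  have hhits : (n : ℝ) * ∑ ℓ, ((Finset.univ.filter (HitsZero T ℓ t)).card : ℝ) ≤ 2 * N := by
    exact_mod_cast card_hitsZero_le T t
  rw [div_sub_div_same, ← Finset.sum_sub_distrib, div_le_iff₀ hN]
  calc ∑ ℓ, (Imeasure n m T ℓ (t + 1) - Imeasure n m T ℓ t)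
      ≤ ∑ ℓ, (2 / n + ((Finset.univ.filter (HitsZero T ℓ t)).card : ℝ)) :=
        Finset.sum_le_sum fun ℓ _ => Imeasure_succ_sub_le T ℓ t
    _ = 2 / n * N + ∑ ℓ, ((Finset.univ.filter (HitsZero T ℓ t)).card : ℝ) := by
        rw [Finset.sum_add_distrib, Finset.sum_const, Finset.card_univ, nsmul_eq_mul, mul_comm]
    _ ≤ 4 / n * N := by
        rw [div_mul_eq_mul_div, div_mul_eq_mul_div, div_add' _ _ _ hn0.ne',
          div_le_div_iff_of_pos_right hn0]
        linarith

/-- The progress measure `I_t = A_t + (2/n)·B_t` grows, in expectation over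
the hard distribution, by at most `4/n` per query. -/
theorem statement7 (n m : ℕ) (hn : 2 ≤ n) (hm : 2 ≤ m)
    (T : DTree (Fin n × Fin m) (PSym n m (Fin n × Fin m))) (t : ℕ) :
    (∑ ℓ : Fin m → Fin n, Imeasure n m T ℓ (t + 1)) / (Fintype.card (Fin m → Fin n) : ℝ) -
      (∑ ℓ : Fin m → Fin n, Imeasure n m T ℓ t) / (Fintype.card (Fin m → Fin n) : ℝ) ≤
      4 / n :=
  statement7_general n m hn T t
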